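/- arXiv:2201.07523 — 5 statements merged into one kernel-verified Lean document; each statement's English description precedes it below -/
import Mathlib

section
/- For any x, y ∈ R^d and R > 0, the Lebesgue measure of the set {t ∈ [0,1] : |x + t y| < R} is at most 2R/(|x| + R). -/
open MeasureTheory Real

theorem stmt1 {d : ℕ} (x y : EuclideanSpace ℝ (Fin d)) (R : ℝ) (hR : 0 < R) :
    volume {t : ℝ | t ∈ Set.Icc (0:ℝ) 1 ∧ ‖x + t • y‖ < R} ≤
      ENNReal.ofReal (2 * R / (‖x‖ + R)) := by
  set S := {t : ℝ | t ∈ Set.Icc (0:ℝ) 1 ∧ ‖x + t • y‖ < R} with hSdef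
  rcases S.eq_empty_or_nonempty with hS | hS
  · simp [hS]
  have hxR : 0 < ‖x‖ + R := by positivity
  have hbound : (0:ℝ) ≤ 2 * R / (‖x‖ + R) := by positivity
  have key : ∀ t1 ∈ S, ∀ t2 ∈ S, t2 - t1 ≤ 2 * R / (‖x‖ + R) := by
    intro t1 ht1 t2 ht2
    obtain ⟨⟨h10, h11⟩, h1R⟩ := ht1
    obtain ⟨⟨h20, h21⟩, h2R⟩ := ht2
    rcases le_or_gt t2 t1 with h | h
    · linarith
    rw [le_div_iff₀ hxR]
    have hy : (0:ℝ) ≤ ‖y‖ := norm_nonneg y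
    have hL : (t2 - t1) * ‖y‖ < 2 * R := by
      have : (t2 - t1) * ‖y‖ = ‖(x + t2 • y) - (x + t1 • y)‖ := by
        rw [show (x + t2 • y) - (x + t1 • y) = (t2 - t1) • y by module,
          norm_smul, Real.norm_eq_abs, abs_of_pos (by linarith)]
      rw [this]
      calc ‖(x + t2 • y) - (x + t1 • y)‖ ≤ ‖x + t2 • y‖ + ‖x + t1 • y‖ :=
            norm_sub_le _ _
        _ < 2 * R := by linarith
    have hx1 : ‖x‖ < R + t1 * ‖y‖ := by
      have : ‖x‖ ≤ ‖x + t1 • y‖ + ‖t1 • y‖ := by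
        calc ‖x‖ = ‖(x + t1 • y) - t1 • y‖ := by rw [add_sub_cancel_right]
          _ ≤ ‖x + t1 • y‖ + ‖t1 • y‖ := norm_sub_le _ _
      rw [norm_smul, Real.norm_eq_abs, abs_of_nonneg h10] at this
      linarith
    nlinarith [mul_pos (show (0:ℝ) < t2 - t1 by linarith)
        (show (0:ℝ) < R + t1 * ‖y‖ - ‖x‖ by linarith),
      mul_nonneg (mul_nonneg (show (0:ℝ) ≤ t2 - t1 by linarith)
        (show (0:ℝ) ≤ 1 - t2 by linarith)) hy,
      mul_nonneg (show (0:ℝ) ≤ 1 - (t2 - t1) by linarith)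
        (show (0:ℝ) ≤ 2 * R - (t2 - t1) * ‖y‖ by linarith)]
  have hbddA : BddAbove S := ⟨1, fun t ht => ht.1.2⟩
  have hbddB : BddBelow S := ⟨0, fun t ht => ht.1.1⟩
  have hsub : S ⊆ Set.Icc (sInf S) (sSup S) :=
    fun t ht => ⟨csInf_le hbddB ht, le_csSup hbddA ht⟩
  calc volume S ≤ volume (Set.Icc (sInf S) (sSup S)) := measure_mono hsub
    _ = ENNReal.ofReal (sSup S - sInf S) := by rw [Real.volume_Icc]
    _ ≤ ENNReal.ofReal (2 * R / (‖x‖ + R)) := by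
        apply ENNReal.ofReal_le_ofReal
        have h1 : ∀ t1 ∈ S, sSup S ≤ t1 + 2 * R / (‖x‖ + R) := by
          intro t1 ht1
          exact csSup_le hS fun t2 ht2 => by linarith [key t1 ht1 t2 ht2]
        have h2 : sSup S - 2 * R / (‖x‖ + R) ≤ sInf S :=
          le_csInf hS fun t1 ht1 => by linarith [h1 t1 ht1]
        linarith
end

section
/- Let b be a C^1 vector field on R^d such that k̃(x) := -sup{u·∇b(x)u : |u|=1} satisfies k̃(x) ≥ -K for all x and k̃(x) ≥ c for all |x| ≥ R, where K, R ≥ 0 and c > 0. Then k(x) := -sup_{y≠x} (x-y)·(b(x)-b(y))/|x-y|² satisfies k(x) ≥ -K for all x, and k(x) ≥ c/2 for all x with |x| ≥ R(4(K+c)/c - 1). -/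
open MeasureTheory Set
open scoped RealInnerProductSpace

/-!
By the fundamental theorem of calculus along the segment from `x` to `y`,
`⟪x - y, b x - b y⟫ / ‖x - y‖²` is an average over `t ∈ [0, 1]` of
`⟪u, Db(x + t (y - x)) u⟫` for a unit vector `u`, hence at most the average of `-k̃` along the
segment. This gives `k ≥ -K` at once. The segment spends a fraction at most `2R / (‖x‖ + R)` of
its time in the ball of radius `R`, where `-k̃ ≤ K`, and elsewhere `-k̃ ≤ -c`; so the average is
at most `(K + c) · 2R / (‖x‖ + R) - c`, which is `≤ -c/2` for `‖x‖` as in the statement.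
-/

section

variable {E : Type*} [NormedAddCommGroup E] [InnerProductSpace ℝ E]

noncomputable def numericalRangeSup (A : E →L[ℝ] E) : ℝ :=
  sSup {r : ℝ | ∃ u : E, ‖u‖ = 1 ∧ r = ⟪u, A u⟫}

lemma numericalRangeSup_of_subsingleton [Subsingleton E] (A : E →L[ℝ] E) :
    numericalRangeSup A = 0 := by
  have hempty : {r : ℝ | ∃ u : E, ‖u‖ = 1 ∧ r = ⟪u, A u⟫} = ∅ := by
    ext r
    simp [Subsingleton.elim _ (0 : E)]
  rw [numericalRangeSup, hempty, Real.sSup_empty]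

lemma inner_apply_le_numericalRangeSup_mul (A : E →L[ℝ] E) (v : E) :
    ⟪v, A v⟫ ≤ numericalRangeSup A * ‖v‖ ^ 2 := by
  rcases eq_or_ne v 0 with rfl | hv
  · simp
  have hbdd : BddAbove {r : ℝ | ∃ u : E, ‖u‖ = 1 ∧ r = ⟪u, A u⟫} := by
    refine ⟨‖A‖, ?_⟩
    rintro _ ⟨u, hu, rfl⟩
    calc ⟪u, A u⟫ ≤ ‖u‖ * ‖A u‖ := real_inner_le_norm _ _
      _ ≤ ‖u‖ * (‖A‖ * ‖u‖) := by gcongr; exact A.le_opNorm u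
      _ = ‖A‖ := by rw [hu]; ring
  set u := ‖v‖⁻¹ • v
  have hvu : ‖v‖ • u = v := smul_inv_smul₀ (norm_ne_zero_iff.2 hv) v
  have hu : ⟪u, A u⟫ ≤ numericalRangeSup A := le_csSup hbdd ⟨u, norm_smul_inv_norm hv, rfl⟩
  calc ⟪v, A v⟫ = ⟪u, A u⟫ * ‖v‖ ^ 2 := by
        conv_lhs => rw [← hvu]
        rw [map_smul, real_inner_smul_left, real_inner_smul_right]
        ring
    _ ≤ numericalRangeSup A * ‖v‖ ^ 2 := by gcongr

lemma continuous_inner_fderiv_line {b : E → E} (hb : ContDiff ℝ 1 b) (x v : E) :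
    Continuous fun t : ℝ => ⟪v, fderiv ℝ b (x + t • v) v⟫ := by
  have := hb.continuous_fderiv one_ne_zero
  fun_prop

lemma inner_sub_eq_integral_inner_fderiv {b : E → E} (hb : ContDiff ℝ 1 b) (x v : E) :
    ⟪v, b (x + v) - b x⟫ = ∫ t in (0 : ℝ)..1, ⟪v, fderiv ℝ b (x + t • v) v⟫ := by
  have hderiv (t : ℝ) :
      HasDerivAt (fun t : ℝ => ⟪v, b (x + t • v)⟫) ⟪v, fderiv ℝ b (x + t • v) v⟫ t := by
    have hline : HasDerivAt (fun t : ℝ => x + t • v) v t := by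
      simpa using ((hasDerivAt_id t).smul_const v).const_add x
    have hcomp := (hb.differentiable one_ne_zero _).hasFDerivAt.comp_hasDerivAt t hline
    simpa using (hasDerivAt_const t v).inner ℝ hcomp
  rw [intervalIntegral.integral_eq_sub_of_hasDerivAt (fun t _ => hderiv t)
    ((continuous_inner_fderiv_line hb x v).intervalIntegrable 0 1)]
  simp [inner_sub_right]

lemma inner_sub_div_le_integral {b : E → E} (hb : ContDiff ℝ 1 b) {x y : E} (hy : y ≠ x)
    {φ : ℝ → ℝ} (hφ : IntervalIntegrable φ volume 0 1)
    (hbound : ∀ t ∈ Icc (0 : ℝ) 1, numericalRangeSup (fderiv ℝ b (x + t • (y - x))) ≤ φ t) :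
    ⟪x - y, b x - b y⟫ / ‖x - y‖ ^ 2 ≤ ∫ t in (0 : ℝ)..1, φ t := by
  have hxy : 0 < ‖x - y‖ ^ 2 := by
    have := sub_ne_zero.2 hy.symm
    positivity
  have hsymm : ⟪x - y, b x - b y⟫ = ⟪y - x, b (x + (y - x)) - b x⟫ := by
    rw [add_sub_cancel, ← neg_sub y x, ← neg_sub (b y) (b x), inner_neg_neg]
  rw [div_le_iff₀ hxy, hsymm, inner_sub_eq_integral_inner_fderiv hb, norm_sub_rev x y,
    ← intervalIntegral.integral_mul_const]
  refine intervalIntegral.integral_mono_on zero_le_one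
    ((continuous_inner_fderiv_line hb x _).intervalIntegrable 0 1) (hφ.mul_const _)
    fun t ht => ?_
  exact (inner_apply_le_numericalRangeSup_mul _ _).trans (by gcongr; exact hbound t ht)

lemma inner_sub_div_le_of_le_outside_ball {b : E → E} (hb : ContDiff ℝ 1 b) {x y : E}
    (hy : y ≠ x) {K c R : ℝ} (hK : ∀ z, numericalRangeSup (fderiv ℝ b z) ≤ K)
    (hc : ∀ z, R ≤ ‖z‖ → numericalRangeSup (fderiv ℝ b z) ≤ -c) :
    ⟪x - y, b x - b y⟫ / ‖x - y‖ ^ 2 ≤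
      (K + c) * volume.real ({t : ℝ | ‖x + t • (y - x)‖ < R} ∩ Ioc 0 1) - c := by
  set S := {t : ℝ | ‖x + t • (y - x)‖ < R}
  have hS : MeasurableSet S := (isOpen_lt (by fun_prop) continuous_const).measurableSet
  have hind : IntervalIntegrable (S.indicator 1) volume 0 1 :=
    (intervalIntegrable_iff_integrableOn_Ioc_of_le zero_le_one).2
      ((integrableOn_const (C := (1 : ℝ)) measure_Ioc_lt_top.ne).indicator hS)
  have hint : ∫ t in (0 : ℝ)..1, S.indicator (1 : ℝ → ℝ) t = volume.real (S ∩ Ioc 0 1) := by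
    rw [intervalIntegral.integral_of_le zero_le_one, integral_indicator_one hS,
      measureReal_restrict_apply hS]
  calc _ ≤ ∫ t in (0 : ℝ)..1, ((K + c) * S.indicator 1 t - c) :=
        inner_sub_div_le_integral hb hy ((hind.const_mul _).sub intervalIntegrable_const)
          fun t _ => ?_
    _ = _ := by
      rw [intervalIntegral.integral_sub (hind.const_mul _) intervalIntegrable_const,
        intervalIntegral.integral_const_mul, hint]
      simp
  by_cases ht : t ∈ S
  · simpa [indicator_of_mem ht] using hK _
  · simpa [indicator_of_notMem ht] using hc _ (not_lt.1 ht)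

lemma volume_real_norm_add_smul_lt_le {x v : E} (hv : v ≠ 0) {R : ℝ} (hR : 0 ≤ R) :
    volume.real ({t : ℝ | ‖x + t • v‖ < R} ∩ Ioc 0 1) ≤ 2 * R / (‖x‖ + R) := by
  rcases hR.eq_or_lt with rfl | hR
  · simp [(norm_nonneg _).not_gt]
  set X := ‖x‖
  set L := ‖v‖
  have hL : 0 < L := norm_pos_iff.2 hv
  set lo := max ((X - R) / L) 0
  set hi := min ((X + R) / L) 1
  have hsub : {t : ℝ | ‖x + t • v‖ < R} ∩ Ioc 0 1 ⊆ Icc lo hi := by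
    rintro t ⟨ht, ht0, ht1⟩
    have htri := abs_norm_sub_norm_le x (-(t • v))
    rw [norm_neg, sub_neg_eq_add, norm_smul, Real.norm_of_nonneg ht0.le] at htri
    obtain ⟨hlo, hhi⟩ := abs_lt.1 (htri.trans_lt ht)
    exact ⟨max_le ((div_le_iff₀ hL).2 (by linarith)) ht0.le,
      le_min ((le_div_iff₀ hL).2 (by linarith)) ht1⟩
  have hlen : (hi - lo) * L ≤ 2 * R := by
    have : hi - lo ≤ (X + R) / L - (X - R) / L := by
      linarith [min_le_left ((X + R) / L) 1, le_max_left ((X - R) / L) 0]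
    rwa [← sub_div, le_div_iff₀ hL, add_sub_sub_cancel, ← two_mul] at this
  have hend : (hi - lo) * L ≤ L - (X - R) := by
    have : hi - lo ≤ 1 - (X - R) / L := by
      linarith [min_le_right ((X + R) / L) 1, le_max_left ((X - R) / L) 0]
    rwa [one_sub_div hL.ne', le_div_iff₀ hL] at this
  have hD1 : hi - lo ≤ 1 := by
    linarith [min_le_right ((X + R) / L) 1, le_max_right ((X - R) / L) 0]
  have hμ : volume.real ({t : ℝ | ‖x + t • v‖ < R} ∩ Ioc 0 1) ≤ max (hi - lo) 0 :=
    (measureReal_mono hsub measure_Icc_lt_top.ne).trans_eq Real.volume_real_Icc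
  -- The segment spends time at most `2R/L` in the ball and cannot enter it before time
  -- `(‖x‖ - R)/L`; the worst case over `L` is `L = ‖x‖ + R`.
  have hD : max (hi - lo) 0 * (X + R) ≤ 2 * R := by
    rcases le_total (hi - lo) 0 with hD | hD
    · rw [max_eq_right hD, zero_mul]
      positivity
    · rw [max_eq_left hD]
      rcases le_total L (X + R) with hLX | hLX <;> nlinarith
  rw [le_div_iff₀ (by positivity)]
  exact (mul_le_mul_of_nonneg_right hμ (by positivity)).trans hD

end

theorem stmt2 {d : ℕ}
    (b : EuclideanSpace ℝ (Fin d) → EuclideanSpace ℝ (Fin d))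
    (hb : ContDiff ℝ 1 b)
    (K R c : ℝ) (hK : 0 ≤ K) (hR : 0 ≤ R) (hc : 0 < c)
    (ktilde k : EuclideanSpace ℝ (Fin d) → ℝ)
    (hktilde : ∀ x, ktilde x =
      -sSup {r : ℝ | ∃ u : EuclideanSpace ℝ (Fin d), ‖u‖ = 1 ∧ r = ⟪u, fderiv ℝ b x u⟫})
    (hk : ∀ x, k x =
      -sSup {r : ℝ | ∃ y : EuclideanSpace ℝ (Fin d), y ≠ x ∧
        r = ⟪x - y, b x - b y⟫ / ‖x - y‖ ^ 2})
    (h1 : ∀ x, -K ≤ ktilde x)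
    (h2 : ∀ x, R ≤ ‖x‖ → c ≤ ktilde x) :
    (∀ x, -K ≤ k x) ∧
      (∀ x, R * (4 * (K + c) / c - 1) ≤ ‖x‖ → c / 2 ≤ k x) := by
  have hsup (z) : numericalRangeSup (fderiv ℝ b z) = -ktilde z := by
    rw [hktilde z, neg_neg]
    rfl
  have hK' (z) : numericalRangeSup (fderiv ℝ b z) ≤ K := by linarith [hsup z, h1 z]
  have hc' (z) (hz : R ≤ ‖z‖) : numericalRangeSup (fderiv ℝ b z) ≤ -c := by
    linarith [hsup z, h2 z hz]
  refine ⟨fun x => ?_, fun x hx => ?_⟩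
  · rw [hk x, neg_le_neg_iff]
    refine Real.sSup_le ?_ hK
    rintro _ ⟨y, hy, rfl⟩
    simpa using inner_sub_div_le_integral hb hy intervalIntegrable_const fun t _ => hK' _
  have hfar : 4 * R * (K + c) ≤ c * (‖x‖ + R) := by
    have hexpand : R * (4 * (K + c) / c - 1) * c = 4 * R * (K + c) - c * R := by
      field_simp
    nlinarith [mul_le_mul_of_nonneg_right hx hc.le]
  rcases subsingleton_or_nontrivial (EuclideanSpace ℝ (Fin d)) with hE | hE
  · have hR0 : R = 0 := by
      rw [Subsingleton.elim x 0, norm_zero] at hfar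
      nlinarith
    have := hc' x (by rw [hR0]; positivity)
    rw [numericalRangeSup_of_subsingleton] at this
    linarith
  obtain ⟨y₀, hy₀⟩ := exists_ne x
  rw [hk x, le_neg]
  refine csSup_le ⟨_, y₀, hy₀, rfl⟩ ?_
  rintro _ ⟨y, hy, rfl⟩
  calc _ ≤ (K + c) * volume.real ({t : ℝ | ‖x + t • (y - x)‖ < R} ∩ Ioc 0 1) - c :=
        inner_sub_div_le_of_le_outside_ball hb hy hK' hc'
    _ ≤ (K + c) * (2 * R / (‖x‖ + R)) - c := by
        gcongr
        exact volume_real_norm_add_smul_lt_le (sub_ne_zero.2 hy) hR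
    _ ≤ -(c / 2) := by
        rw [mul_div_assoc']
        have : (K + c) * (2 * R) / (‖x‖ + R) ≤ c / 2 :=
          div_le_of_le_mul₀ (by positivity) (by positivity) (by linarith)
        linarith
end

section
/- Let β > 2, U(x) = |x|^β/β on R^d and b = -∇U. Then for all x ≠ y in R^d, (x-y)·(b(x)-b(y)) ≤ -(|x|^{β-2}/(2(β-1))) |x-y|². In particular k(x) := -sup_{y≠x}(x-y)·(b(x)-b(y))/|x-y|² satisfies k(x) ≥ |x|^{β-2}/(2(β-1)) for all x. -/
open Real
open scoped RealInnerProductSpace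

/-!
Since `∇U(x) = ‖x‖^(β-2) x`, the claim is a strong-monotonicity estimate for `x ↦ ‖x‖^q x`,
`q = β - 2 ≥ 0`. Writing `a = ‖x‖`, `e = ‖y‖`, `A = a^q`, `B = e^q`, one has
`⟪x - y, A x - B y⟫ = (A + B)(a e - ⟪x, y⟫) + (A a - B e)(a - e)` and
`‖x - y‖² = 2 (a e - ⟪x, y⟫) + (a - e)²`. The first summands are controlled by Cauchy–Schwarz,
the second by the one-dimensional monotonicity `(A a - B e)(a - e) ≥ A (a - e)²`; together they
give the constant `A / 2`, which is at least `A / (2 (β - 1))`.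
-/

section InnerProductSpace

variable {E : Type*} [NormedAddCommGroup E] [InnerProductSpace ℝ E]

theorem hasGradientAt_norm_rpow_div [CompleteSpace E] (x : E) {p : ℝ} (hp : 1 < p) :
    HasGradientAt (fun y : E ↦ ‖y‖ ^ p / p) (‖x‖ ^ (p - 2) • x) x := by
  have hfun : (fun y : E ↦ ‖y‖ ^ p / p) = p⁻¹ • fun y ↦ ‖y‖ ^ p := by
    ext y
    simp [div_eq_inv_mul]
  rw [hasGradientAt_iff_hasFDerivAt, hfun]
  refine ((hasFDerivAt_norm_rpow x hp).const_smul p⁻¹).congr_fderiv ?_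
  ext v
  have hp0 : p ≠ 0 := by linarith
  simp only [InnerProductSpace.toDual_apply_apply, real_inner_smul_left,
    smul_apply, innerSL_apply_apply, smul_eq_mul]
  field_simp

theorem rpow_mul_sub_sq_le {q a e : ℝ} (hq : 0 ≤ q) (ha : 0 ≤ a) (he : 0 ≤ e) :
    a ^ q * (a - e) ^ 2 ≤ (a ^ q * a - e ^ q * e) * (a - e) := by
  rcases le_total a e with hae | hea
  · have hpow : a ^ q ≤ e ^ q := rpow_le_rpow ha hae hq
    nlinarith [mul_nonneg (sub_nonneg.2 hpow) (mul_nonneg he (sub_nonneg.2 hae))]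
  · have hpow : e ^ q ≤ a ^ q := rpow_le_rpow he hea hq
    nlinarith [mul_nonneg (sub_nonneg.2 hpow) (mul_nonneg he (sub_nonneg.2 hea))]

theorem norm_rpow_div_two_mul_norm_sub_sq_le_inner {q : ℝ} (hq : 0 ≤ q) (x y : E) :
    ‖x‖ ^ q / 2 * ‖x - y‖ ^ 2 ≤ ⟪x - y, ‖x‖ ^ q • x - ‖y‖ ^ q • y⟫ := by
  have hA : 0 ≤ ‖x‖ ^ q := rpow_nonneg (norm_nonneg x) q
  have hB : 0 ≤ ‖y‖ ^ q := rpow_nonneg (norm_nonneg y) q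
  have hinner : ⟪x - y, ‖x‖ ^ q • x - ‖y‖ ^ q • y⟫
      = (‖x‖ ^ q + ‖y‖ ^ q) * (‖x‖ * ‖y‖ - ⟪x, y⟫)
        + (‖x‖ ^ q * ‖x‖ - ‖y‖ ^ q * ‖y‖) * (‖x‖ - ‖y‖) := by
    simp only [inner_sub_left, inner_sub_right, real_inner_smul_right, real_inner_self_eq_norm_sq,
      real_inner_comm x y]
    ring
  have hnorm : ‖x - y‖ ^ 2 = 2 * (‖x‖ * ‖y‖ - ⟪x, y⟫) + (‖x‖ - ‖y‖) ^ 2 := by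
    rw [norm_sub_sq_real]
    ring
  have hcs : 0 ≤ ‖x‖ * ‖y‖ - ⟪x, y⟫ := sub_nonneg.2 (real_inner_le_norm x y)
  have hradial := rpow_mul_sub_sq_le hq (norm_nonneg x) (norm_nonneg y)
  rw [hinner, hnorm]
  nlinarith [mul_nonneg hB hcs, mul_nonneg hA (sq_nonneg (‖x‖ - ‖y‖))]

end InnerProductSpace

theorem le_neg_sSup_of_forall_le_neg {α : Type*} {P : α → Prop} {f : α → ℝ} {c : ℝ}
    (hf : ∀ a, P a → f a ≤ -c) (hc : (∀ a, ¬ P a) → c ≤ 0) :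
    c ≤ -sSup {r | ∃ a, P a ∧ r = f a} := by
  rcases Set.eq_empty_or_nonempty {r | ∃ a, P a ∧ r = f a} with hS | hS
  · rw [hS, Real.sSup_empty, neg_zero]
    exact hc fun a ha ↦ hS.subset ⟨a, ha, rfl⟩
  · have := csSup_le hS (by rintro r ⟨a, ha, rfl⟩; exact hf a ha)
    linarith

theorem stmt5 {d : ℕ} (β : ℝ) (hβ : 2 < β)
    (U : EuclideanSpace ℝ (Fin d) → ℝ)
    (hU : ∀ x, U x = ‖x‖ ^ β / β)
    (b : EuclideanSpace ℝ (Fin d) → EuclideanSpace ℝ (Fin d))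
    (hb : ∀ x, b x = -gradient U x)
    (k : EuclideanSpace ℝ (Fin d) → ℝ)
    (hk : ∀ x, k x =
      -sSup {r : ℝ | ∃ y : EuclideanSpace ℝ (Fin d), y ≠ x ∧
        r = ⟪x - y, b x - b y⟫ / ‖x - y‖ ^ 2}) :
    (∀ x y : EuclideanSpace ℝ (Fin d), x ≠ y →
      ⟪x - y, b x - b y⟫ ≤ -(‖x‖ ^ (β - 2) / (2 * (β - 1))) * ‖x - y‖ ^ 2) ∧
    (∀ x, ‖x‖ ^ (β - 2) / (2 * (β - 1)) ≤ k x) := by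
  have hbx : ∀ x, b x = -(‖x‖ ^ (β - 2) • x) := fun x ↦ by
    rw [hb, funext hU, (hasGradientAt_norm_rpow_div x (by linarith)).gradient]
  have hmono : ∀ x y : EuclideanSpace ℝ (Fin d),
      ⟪x - y, b x - b y⟫ ≤ -(‖x‖ ^ (β - 2) / (2 * (β - 1))) * ‖x - y‖ ^ 2 := fun x y ↦ by
    have hconst : ‖x‖ ^ (β - 2) / (2 * (β - 1)) ≤ ‖x‖ ^ (β - 2) / 2 :=
      div_le_div_of_nonneg_left (rpow_nonneg (norm_nonneg x) _) two_pos (by linarith)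
    have := norm_rpow_div_two_mul_norm_sub_sq_le_inner (by linarith : 0 ≤ β - 2) x y
    rw [hbx, hbx, neg_sub_neg, ← neg_sub (‖x‖ ^ (β - 2) • x), inner_neg_right]
    nlinarith [sq_nonneg ‖x - y‖]
  refine ⟨fun x y _ ↦ hmono x y, fun x ↦ hk x ▸ le_neg_sSup_of_forall_le_neg ?_ ?_⟩
  · intro y hy
    rw [div_le_iff₀ (pow_pos (norm_pos_iff.2 (sub_ne_zero.2 hy.symm)) 2)]
    exact hmono x y
  · -- `sSup ∅ = 0`: the set is empty only for `d = 0`, where `x = 0`.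
    intro hall
    rw [← not_not.1 (hall 0), norm_zero, zero_rpow (by linarith), zero_div]
end

section
/- Let g and h be as above, with h(s) = s g''(s) + (d/2) g'(s) and 4K* = K + c/2, and let κ be the radial function κ(x) = g(|x|²) - inf g on R^d. Then Δκ(x) = 4|x|² g''(|x|²) + 2d g'(|x|²) = 4 h(|x|²), hence Δκ(x) = -4K* = -(K + c/2) for |x| < R and Δκ(x) ≤ c/2 for all x; therefore Δκ(x) ≤ k(x) - c/2 for every x ∈ R^d whenever k ≥ -K everywhere and k ≥ c on {|x| ≥ R}. -/
open MeasureTheory Real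

theorem stmt14 {d : ℕ} (hd : 1 ≤ d) (K c R Rstar : ℝ)
    (hK : 0 ≤ K) (hc : 0 < c) (hR : 0 < R) (hRstar : R ≤ Rstar)
    (h : ℝ → ℝ)
    (hh : ∀ r, h r = if r < R ^ 2 then -(K / 4 + c / 8) else if r < Rstar ^ 2 then c / 8 else 0)
    (g' g'' : ℝ → ℝ)
    (hODE : ∀ r, 0 ≤ r → r * g'' r + (d / 2 : ℝ) * g' r = h r)
    (k : EuclideanSpace ℝ (Fin d) → ℝ)
    (hk1 : ∀ x, -K ≤ k x) (hk2 : ∀ x, R ≤ ‖x‖ → c ≤ k x)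
    (lapκ : EuclideanSpace ℝ (Fin d) → ℝ)
    -- Laplacian of the radial function κ(x) = g(|x|²)
    (hlap : ∀ x, lapκ x = 4 * ‖x‖ ^ 2 * g'' (‖x‖ ^ 2) + 2 * d * g' (‖x‖ ^ 2)) :
    (∀ x, lapκ x = 4 * h (‖x‖ ^ 2)) ∧
    (∀ x : EuclideanSpace ℝ (Fin d), ‖x‖ < R → lapκ x = -(K + c / 2)) ∧
    (∀ x, lapκ x ≤ c / 2) ∧
    (∀ x, lapκ x ≤ k x - c / 2) := by
  have key : ∀ x : EuclideanSpace ℝ (Fin d), lapκ x = 4 * h (‖x‖ ^ 2) := by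
    intro x
    rw [hlap x, ← hODE (‖x‖ ^ 2) (sq_nonneg _)]
    ring
  have hbound : ∀ x : EuclideanSpace ℝ (Fin d), lapκ x ≤ c / 2 := by
    intro x
    rw [key x, hh]
    split_ifs <;> nlinarith
  have hin : ∀ x : EuclideanSpace ℝ (Fin d), ‖x‖ < R → lapκ x = -(K + c / 2) := by
    intro x hx
    rw [key x, hh, if_pos (by nlinarith [norm_nonneg x])]
    ring
  refine ⟨key, hin, hbound, fun x => ?_⟩
  rcases lt_or_ge ‖x‖ R with hx | hx
  · rw [hin x hx]; linarith [hk1 x]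
  · linarith [hbound x, hk2 x hx]
end

section
/- Let μ^{k} denote the marginal of a probability measure π on (R^d)^N onto the first k coordinates, and suppose π is exchangeable (invariant under coordinate permutations). Then for any exchangeable probability measure π' on (R^d)^N, W₂(π^{k}, π'^{k}) ≤ √(k/N) · W₂(π, π'). Moreover, for product measures, W₂(ν₀^{⊗N}, μ₀^{⊗N}) ≤ √N · W₂(ν₀, μ₀). -/
open MeasureTheory Real

/-- The order-`p` Wasserstein distance, defined as an infimum over couplings. -/
noncomputable def wassersteinDist {E : Type*} [NormedAddCommGroup E] [MeasurableSpace E]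
    (p : ℝ) (μ ν : Measure E) : ℝ :=
  sInf {r : ℝ | ∃ pl : Measure (E × E), IsProbabilityMeasure pl ∧
    pl.map Prod.fst = μ ∧ pl.map Prod.snd = ν ∧
    r = (∫ z, ‖z.1 - z.2‖ ^ p ∂pl) ^ (1 / p)}


/-- `PiLp` is a type synonym for the Pi type; give it the product measurable structure. -/
instance piLpMeasurableSpace {ι : Type*} {E : ι → Type*} [∀ i, MeasurableSpace (E i)] :
    MeasurableSpace (PiLp 2 E) := MeasurableSpace.comap WithLp.ofLp MeasurableSpace.pi

/-!
Averaging a coupling of `π` and `π'` over all simultaneous permutations of the coordinates gives,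
by exchangeability, again a coupling of `π` and `π'`, in which every coordinate pair carries the
same share `1/N` of the quadratic cost. Projecting it to `k` coordinates couples the `k`-marginals
at `k/N` times the original cost. For product measures, the `N`-fold product of a coupling of `ν₀`
and `μ₀` couples the product measures at `N` times its cost. Taking square roots and infima over
couplings turns these cost identities into the two bounds on `W₂`.
-/

open scoped ENNReal

section Coupling

variable {α β : Type*} [MeasurableSpace α] [MeasurableSpace β]

structure IsCoupling (pl : Measure (α × α)) (μ ν : Measure α) : Prop where
  isProbabilityMeasure : IsProbabilityMeasure pl
  map_fst : pl.map Prod.fst = μ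
  map_snd : pl.map Prod.snd = ν

theorem isCoupling_prod (μ ν : Measure α) [IsProbabilityMeasure μ] [IsProbabilityMeasure ν] :
    IsCoupling (μ.prod ν) μ ν :=
  ⟨inferInstance, by simp, by simp⟩

theorem IsCoupling.map_prodMap {pl : Measure (α × α)} {μ ν : Measure α} (h : IsCoupling pl μ ν)
    {f : α → β} (hf : Measurable f) :
    IsCoupling (pl.map (Prod.map f f)) (μ.map f) (ν.map f) := by
  have := h.isProbabilityMeasure
  refine ⟨Measure.isProbabilityMeasure_map (by fun_prop), ?_, ?_⟩
  · rw [Measure.map_map measurable_fst (by fun_prop), Prod.map_fst', ← h.map_fst,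
      Measure.map_map hf measurable_fst]
  · rw [Measure.map_map measurable_snd (by fun_prop), Prod.map_snd', ← h.map_snd,
      Measure.map_map hf measurable_snd]

theorem IsCoupling.average {ι : Type*} [Fintype ι] [Nonempty ι] {m : ι → Measure (α × α)}
    {μ ν : Measure α} (h : ∀ i, IsCoupling (m i) μ ν) :
    IsCoupling ((Fintype.card ι : ℝ≥0∞)⁻¹ • ∑ i, m i) μ ν := by
  have average_map {f : α × α → α} (hf : Measurable f) {ρ : Measure α}
      (hρ : ∀ i, (m i).map f = ρ) : ((Fintype.card ι : ℝ≥0∞)⁻¹ • ∑ i, m i).map f = ρ := by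
    rw [Measure.map_smul, Measure.map_finset_sum' hf.aemeasurable]
    simp only [hρ, Finset.sum_const, Finset.card_univ, ← Nat.cast_smul_eq_nsmul ℝ≥0∞, smul_smul]
    rw [ENNReal.inv_mul_cancel (by simp) (by simp), one_smul]
  have hfst := average_map measurable_fst fun i => (h i).map_fst
  refine ⟨⟨?_⟩, hfst, average_map measurable_snd fun i => (h i).map_snd⟩
  obtain ⟨i⟩ := ‹Nonempty ι›
  have := (h i).isProbabilityMeasure
  have : IsProbabilityMeasure μ := (h i).map_fst ▸ Measure.isProbabilityMeasure_map (by fun_prop)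
  rw [← Set.preimage_univ (f := Prod.fst), ← Measure.map_apply measurable_fst .univ, hfst,
    measure_univ]

theorem IsCoupling.pi {ι : Type*} [Fintype ι] {pl : Measure (α × α)} {μ ν : Measure α}
    (h : IsCoupling pl μ ν) :
    IsCoupling ((Measure.pi fun _ : ι => pl).map fun z => (fun i => (z i).1, fun i => (z i).2))
      (Measure.pi fun _ => μ) (Measure.pi fun _ => ν) := by
  have := h.isProbabilityMeasure
  refine ⟨Measure.isProbabilityMeasure_map (by fun_prop), ?_, ?_⟩
  · rw [Measure.map_map measurable_fst (by fun_prop), ← h.map_fst]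
    exact Measure.pi_map_pi fun _ => measurable_fst.aemeasurable
  · rw [Measure.map_map measurable_snd (by fun_prop), ← h.map_snd]
    exact Measure.pi_map_pi fun _ => measurable_snd.aemeasurable

end Coupling

section Cost

variable {E F : Type*} [NormedAddCommGroup E] [MeasurableSpace E]
  [NormedAddCommGroup F] [MeasurableSpace F]

noncomputable def sqCost (pl : Measure (E × E)) : ℝ≥0∞ :=
  ∫⁻ z, ‖z.1 - z.2‖ₑ ^ 2 ∂pl

variable [BorelSpace E] [SecondCountableTopology E]

theorem integral_norm_sub_rpow_two (pl : Measure (E × E)) :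
    ∫ z, ‖z.1 - z.2‖ ^ (2 : ℝ) ∂pl = (sqCost pl).toReal := by
  simp only [Real.rpow_two]
  rw [integral_eq_lintegral_of_nonneg_ae (.of_forall fun z => by positivity) (by fun_prop)]
  refine congrArg ENNReal.toReal (lintegral_congr fun z => ?_)
  rw [ENNReal.ofReal_pow (norm_nonneg _), ofReal_norm]

theorem wassersteinDist_two_eq (μ ν : Measure E) :
    wassersteinDist 2 μ ν = sInf ((fun pl => √(sqCost pl).toReal) '' {pl | IsCoupling pl μ ν}) := by
  unfold wassersteinDist
  congr 1
  ext r
  simp only [Set.mem_ofPred_eq, Set.mem_image, integral_norm_sub_rpow_two, ← Real.sqrt_eq_rpow]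
  constructor
  · rintro ⟨pl, h1, h2, h3, rfl⟩
    exact ⟨pl, ⟨h1, h2, h3⟩, rfl⟩
  · rintro ⟨pl, ⟨h1, h2, h3⟩, rfl⟩
    exact ⟨pl, h1, h2, h3, rfl⟩

theorem wassersteinDist_two_le {pl : Measure (E × E)} {μ ν : Measure E} (h : IsCoupling pl μ ν) :
    wassersteinDist 2 μ ν ≤ √(sqCost pl).toReal := by
  rw [wassersteinDist_two_eq]
  exact csInf_le ⟨0, by rintro _ ⟨_, _, rfl⟩; positivity⟩ ⟨pl, h, rfl⟩

variable [BorelSpace F] [SecondCountableTopology F]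

/-- The hypothesis is an equality rather than a bound because a coupling of infinite cost
contributes `0` to `wassersteinDist` (the Bochner integral of a non-integrable function is `0`),
so an infinite cost must be matched by an infinite cost. -/
theorem wassersteinDist_two_le_sqrt_mul {μ ν : Measure E} [IsProbabilityMeasure μ]
    [IsProbabilityMeasure ν] {μ' ν' : Measure F} (a : ℝ≥0∞)
    (h : ∀ pl, IsCoupling pl μ ν → ∃ pl', IsCoupling pl' μ' ν' ∧ sqCost pl' = a * sqCost pl) :
    wassersteinDist 2 μ' ν' ≤ √a.toReal * wassersteinDist 2 μ ν := by
  rw [wassersteinDist_two_eq μ, ← smul_eq_mul, ← Real.sInf_smul_of_nonneg (by positivity)]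
  refine le_csInf (((show Set.Nonempty {pl | IsCoupling pl μ ν} from
    ⟨_, isCoupling_prod μ ν⟩).image _).smul_set) ?_
  rintro _ ⟨_, ⟨pl, hpl, rfl⟩, rfl⟩
  obtain ⟨pl', hpl', hcost⟩ := h pl hpl
  calc wassersteinDist 2 μ' ν' ≤ √(sqCost pl').toReal := wassersteinDist_two_le hpl'
    _ = √a.toReal * √(sqCost pl).toReal := by
      rw [hcost, ENNReal.toReal_mul, Real.sqrt_mul ENNReal.toReal_nonneg]

end Cost

theorem Equiv.Perm.inv_card_mul_sum_apply {ι : Type*} [Fintype ι] [DecidableEq ι]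
    (c : ι → ℝ≥0∞) (i : ι) :
    (Fintype.card (Equiv.Perm ι) : ℝ≥0∞)⁻¹ * ∑ σ : Equiv.Perm ι, c (σ i) =
      (Fintype.card ι : ℝ≥0∞)⁻¹ * ∑ j, c j := by
  have sum_apply_eq (j : ι) : ∑ σ : Equiv.Perm ι, c (σ j) = ∑ σ : Equiv.Perm ι, c (σ i) :=
    Fintype.sum_equiv (Equiv.mulRight (Equiv.swap j i)) _ _ fun σ => by simp
  have double_count : (Fintype.card ι : ℝ≥0∞) * ∑ σ : Equiv.Perm ι, c (σ i) =
      Fintype.card (Equiv.Perm ι) * ∑ j, c j :=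
    calc _ = ∑ j : ι, ∑ σ : Equiv.Perm ι, c (σ j) := by simp [sum_apply_eq]
      _ = ∑ σ : Equiv.Perm ι, ∑ j, c (σ j) := Finset.sum_comm
      _ = _ := by simp [Equiv.sum_comp]
  have : Nonempty ι := ⟨i⟩
  rw [← ENNReal.div_eq_inv_mul, ← ENNReal.div_eq_inv_mul,
    ENNReal.div_eq_div_iff (by simp) (by simp) (by simp) (by simp), double_count]

theorem PiLp.enorm_sq_eq_sum {ι : Type*} [Fintype ι] {β : ι → Type*}
    [∀ i, SeminormedAddCommGroup (β i)] (x : PiLp 2 β) : ‖x‖ₑ ^ 2 = ∑ i, ‖x i‖ₑ ^ 2 := by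
  simp only [← ofReal_norm, ← ENNReal.ofReal_pow (norm_nonneg _)]
  rw [PiLp.norm_sq_eq_of_L2, ENNReal.ofReal_sum_of_nonneg (fun i _ => by positivity)]

section PiLp

variable {E ι κ : Type*}

def PiLp.funLeft (e : κ → ι) (x : PiLp 2 (fun _ : ι => E)) : PiLp 2 (fun _ : κ => E) :=
  WithLp.toLp 2 fun j => x (e j)

variable [MeasurableSpace E]

@[fun_prop]
theorem PiLp.measurable_funLeft (e : κ → ι) : Measurable (PiLp.funLeft (E := E) e) := by
  unfold PiLp.funLeft
  fun_prop

def Exchangeable (μ : Measure (PiLp 2 (fun _ : ι => E))) : Prop :=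
  ∀ σ : Equiv.Perm ι, μ.map (PiLp.funLeft σ) = μ

noncomputable def permAverage [Fintype ι] [DecidableEq ι]
    (pl : Measure (PiLp 2 (fun _ : ι => E) × PiLp 2 (fun _ : ι => E))) :
    Measure (PiLp 2 (fun _ : ι => E) × PiLp 2 (fun _ : ι => E)) :=
  (Fintype.card (Equiv.Perm ι) : ℝ≥0∞)⁻¹ •
    ∑ σ : Equiv.Perm ι, pl.map (Prod.map (PiLp.funLeft σ) (PiLp.funLeft σ))

theorem IsCoupling.permAverage [Fintype ι] [DecidableEq ι]
    {pl : Measure (PiLp 2 (fun _ : ι => E) × PiLp 2 (fun _ : ι => E))}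
    {μ ν : Measure (PiLp 2 (fun _ : ι => E))} (h : IsCoupling pl μ ν) (hμ : Exchangeable μ)
    (hν : Exchangeable ν) : IsCoupling (permAverage pl) μ ν :=
  IsCoupling.average fun σ => hμ σ ▸ hν σ ▸ h.map_prodMap (PiLp.measurable_funLeft σ)

variable [NormedAddCommGroup E] [BorelSpace E] [SecondCountableTopology E]

theorem sqCost_eq_sum [Fintype ι]
    (pl : Measure (PiLp 2 (fun _ : ι => E) × PiLp 2 (fun _ : ι => E))) :
    sqCost pl = ∑ i, sqCost (pl.map (Prod.map (· i) (· i))) := by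
  simp only [sqCost, PiLp.enorm_sq_eq_sum, PiLp.sub_apply]
  rw [lintegral_finsetSum _ fun i _ => by fun_prop]
  refine Finset.sum_congr rfl fun i _ => ?_
  rw [lintegral_map (by fun_prop) (by fun_prop)]
  rfl

theorem sqCost_map_funLeft [Fintype κ]
    (pl : Measure (PiLp 2 (fun _ : ι => E) × PiLp 2 (fun _ : ι => E))) (e : κ → ι) :
    sqCost (pl.map (Prod.map (PiLp.funLeft e) (PiLp.funLeft e))) =
      ∑ j, sqCost (pl.map (Prod.map (· (e j)) (· (e j)))) := by
  rw [sqCost_eq_sum]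
  refine Finset.sum_congr rfl fun j _ => ?_
  rw [Measure.map_map (by fun_prop) (by fun_prop)]
  rfl

theorem sqCost_map_eval_permAverage [Fintype ι] [DecidableEq ι]
    (pl : Measure (PiLp 2 (fun _ : ι => E) × PiLp 2 (fun _ : ι => E))) (i : ι) :
    sqCost ((permAverage pl).map (Prod.map (· i) (· i))) =
      (Fintype.card ι : ℝ≥0∞)⁻¹ * sqCost pl := by
  rw [sqCost_eq_sum pl, ← Equiv.Perm.inv_card_mul_sum_apply _ i, permAverage, Measure.map_smul,
    Measure.map_finset_sum' (by fun_prop)]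
  simp only [sqCost, lintegral_smul_measure, lintegral_finsetSum_measure, smul_eq_mul]
  congr 1
  refine Finset.sum_congr rfl fun σ _ => ?_
  rw [Measure.map_map (by fun_prop) (by fun_prop)]
  rfl

theorem sqCost_map_funLeft_permAverage [Fintype ι] [DecidableEq ι] [Fintype κ]
    (pl : Measure (PiLp 2 (fun _ : ι => E) × PiLp 2 (fun _ : ι => E))) (e : κ → ι) :
    sqCost ((permAverage pl).map (Prod.map (PiLp.funLeft e) (PiLp.funLeft e))) =
      Fintype.card κ / Fintype.card ι * sqCost pl := by
  simp only [sqCost_map_funLeft, sqCost_map_eval_permAverage, Finset.sum_const, Finset.card_univ,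
    nsmul_eq_mul, ENNReal.div_eq_inv_mul, mul_left_comm, mul_assoc]

theorem wassersteinDist_two_map_funLeft_le [Fintype ι] [Fintype κ]
    {μ ν : Measure (PiLp 2 (fun _ : ι => E))} [IsProbabilityMeasure μ] [IsProbabilityMeasure ν]
    (hμ : Exchangeable μ) (hν : Exchangeable ν) (e : κ → ι) :
    wassersteinDist 2 (μ.map (PiLp.funLeft e)) (ν.map (PiLp.funLeft e)) ≤
      √((Fintype.card κ : ℝ) / Fintype.card ι) * wassersteinDist 2 μ ν := by
  classical
  simpa using wassersteinDist_two_le_sqrt_mul (Fintype.card κ / Fintype.card ι) fun pl hpl =>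
    ⟨_, (hpl.permAverage hμ hν).map_prodMap (PiLp.measurable_funLeft e),
      sqCost_map_funLeft_permAverage pl e⟩

theorem sqCost_map_toLp_pi [Fintype ι] (pl : Measure (E × E)) [IsProbabilityMeasure pl] :
    sqCost (((Measure.pi fun _ : ι => pl).map fun z => (fun i => (z i).1, fun i => (z i).2)).map
      (Prod.map (WithLp.toLp 2) (WithLp.toLp 2))) = Fintype.card ι * sqCost pl := by
  rw [sqCost_eq_sum, ← Finset.card_univ, ← nsmul_eq_mul, ← Finset.sum_const]
  refine Finset.sum_congr rfl fun i _ => ?_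
  rw [Measure.map_map (by fun_prop) (by fun_prop), Measure.map_map (by fun_prop) (by fun_prop)]
  exact congrArg sqCost (measurePreserving_eval _ i).map_eq

theorem wassersteinDist_two_pi_le [Fintype ι] (μ ν : Measure E) [IsProbabilityMeasure μ]
    [IsProbabilityMeasure ν] :
    wassersteinDist 2 ((Measure.pi fun _ : ι => μ).map (WithLp.toLp 2) :
        Measure (PiLp 2 (fun _ : ι => E))) ((Measure.pi fun _ : ι => ν).map (WithLp.toLp 2)) ≤
      √(Fintype.card ι) * wassersteinDist 2 μ ν := by
  simpa using wassersteinDist_two_le_sqrt_mul (Fintype.card ι) fun pl hpl =>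
    have := hpl.isProbabilityMeasure
    ⟨_, hpl.pi.map_prodMap (WithLp.measurable_toLp 2 _), sqCost_map_toLp_pi pl⟩

end PiLp

theorem stmt17_general {d N k : ℕ} (hk : k ≤ N)
    (pr pr' : Measure (PiLp 2 (fun _ : Fin N => EuclideanSpace ℝ (Fin d))))
    [IsProbabilityMeasure pr] [IsProbabilityMeasure pr']
    -- exchangeability
    (hexch : ∀ σ : Equiv.Perm (Fin N),
      Measure.map (fun x : PiLp 2 (fun _ : Fin N => EuclideanSpace ℝ (Fin d)) =>
        (WithLp.toLp 2 (fun i => x (σ i)) : PiLp 2 (fun _ : Fin N => EuclideanSpace ℝ (Fin d)))) pr = pr)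
    (hexch' : ∀ σ : Equiv.Perm (Fin N),
      Measure.map (fun x : PiLp 2 (fun _ : Fin N => EuclideanSpace ℝ (Fin d)) =>
        (WithLp.toLp 2 (fun i => x (σ i)) : PiLp 2 (fun _ : Fin N => EuclideanSpace ℝ (Fin d)))) pr' = pr')
    (ν₀ μ₀ : Measure (EuclideanSpace ℝ (Fin d)))
    [IsProbabilityMeasure ν₀] [IsProbabilityMeasure μ₀] :
    wassersteinDist 2
        (Measure.map (fun x : PiLp 2 (fun _ : Fin N => EuclideanSpace ℝ (Fin d)) =>
          (WithLp.toLp 2 (fun i => x (Fin.castLE hk i)) : PiLp 2 (fun _ : Fin k => EuclideanSpace ℝ (Fin d)))) pr)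
        (Measure.map (fun x : PiLp 2 (fun _ : Fin N => EuclideanSpace ℝ (Fin d)) =>
          (WithLp.toLp 2 (fun i => x (Fin.castLE hk i)) : PiLp 2 (fun _ : Fin k => EuclideanSpace ℝ (Fin d)))) pr')
      ≤ Real.sqrt ((k : ℝ) / N) * wassersteinDist 2 pr pr' ∧
    wassersteinDist 2
        (Measure.map (WithLp.toLp 2) (Measure.pi (fun _ : Fin N => ν₀)) :
          Measure (PiLp 2 (fun _ : Fin N => EuclideanSpace ℝ (Fin d))))
        (Measure.map (WithLp.toLp 2) (Measure.pi (fun _ : Fin N => μ₀)))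
      ≤ Real.sqrt (N : ℝ) * wassersteinDist 2 ν₀ μ₀ := by
  refine ⟨?_, ?_⟩
  · have h := wassersteinDist_two_map_funLeft_le hexch hexch' (Fin.castLE hk)
    rwa [Fintype.card_fin, Fintype.card_fin] at h
  · simpa using wassersteinDist_two_pi_le (ι := Fin N) ν₀ μ₀

theorem stmt17 {d N k : ℕ} (hk : k ≤ N) (hN : 0 < N)
    (pr pr' : Measure (PiLp 2 (fun _ : Fin N => EuclideanSpace ℝ (Fin d))))
    [IsProbabilityMeasure pr] [IsProbabilityMeasure pr']
    -- exchangeability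
    (hexch : ∀ σ : Equiv.Perm (Fin N),
      Measure.map (fun x : PiLp 2 (fun _ : Fin N => EuclideanSpace ℝ (Fin d)) =>
        (WithLp.toLp 2 (fun i => x (σ i)) : PiLp 2 (fun _ : Fin N => EuclideanSpace ℝ (Fin d)))) pr = pr)
    (hexch' : ∀ σ : Equiv.Perm (Fin N),
      Measure.map (fun x : PiLp 2 (fun _ : Fin N => EuclideanSpace ℝ (Fin d)) =>
        (WithLp.toLp 2 (fun i => x (σ i)) : PiLp 2 (fun _ : Fin N => EuclideanSpace ℝ (Fin d)))) pr' = pr')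
    (ν₀ μ₀ : Measure (EuclideanSpace ℝ (Fin d)))
    [IsProbabilityMeasure ν₀] [IsProbabilityMeasure μ₀] :
    wassersteinDist 2
        (Measure.map (fun x : PiLp 2 (fun _ : Fin N => EuclideanSpace ℝ (Fin d)) =>
          (WithLp.toLp 2 (fun i => x (Fin.castLE hk i)) : PiLp 2 (fun _ : Fin k => EuclideanSpace ℝ (Fin d)))) pr)
        (Measure.map (fun x : PiLp 2 (fun _ : Fin N => EuclideanSpace ℝ (Fin d)) =>
          (WithLp.toLp 2 (fun i => x (Fin.castLE hk i)) : PiLp 2 (fun _ : Fin k => EuclideanSpace ℝ (Fin d)))) pr')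
      ≤ Real.sqrt ((k : ℝ) / N) * wassersteinDist 2 pr pr' ∧
    wassersteinDist 2
        (Measure.map (WithLp.toLp 2) (Measure.pi (fun _ : Fin N => ν₀)) :
          Measure (PiLp 2 (fun _ : Fin N => EuclideanSpace ℝ (Fin d))))
        (Measure.map (WithLp.toLp 2) (Measure.pi (fun _ : Fin N => μ₀)))
      ≤ Real.sqrt (N : ℝ) * wassersteinDist 2 ν₀ μ₀ :=
  stmt17_general hk pr pr' hexch hexch' ν₀ μ₀
end
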